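/- arXiv:2310.20181 — 9 statements merged into one kernel-verified Lean document; each statement's English description precedes it below -/
import Mathlib

section
/- Let (α, μ) be a measure space, let V : α → ℝ be measurable with essential supremum ‖V‖_∞ < ∞, let β ∈ ℝ and σ > 0, and define B(v)(x) = V(x) v(x) + β |v(x)|^(2σ) v(x). Then for all measurable v, w : α → ℂ with |v(x)| ≤ M and |w(x)| ≤ M almost everywhere, one has ‖B(v) − B(w)‖_{L²} ≤ (‖V‖_∞ + (2σ+1) |β| M^(2σ)) ‖v − w‖_{L²}. -/
open MeasureTheory

lemma rpow_sub_rpow_mul_le_of_one_le {p a b : ℝ} (hp : 1 ≤ p) (hb : 0 ≤ b) (hba : b ≤ a) :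
    (a ^ p - b ^ p) * a ≤ p * a ^ p * (a - b) := by
  rcases (hb.trans hba).eq_or_lt with rfl | ha
  · obtain rfl : b = 0 := le_antisymm hba hb
    simp
  have bernoulli : 1 + p * (b / a - 1) ≤ b ^ p / a ^ p := by
    have := one_add_mul_self_le_rpow_one_add (s := b / a - 1) (by linarith [div_nonneg hb ha.le]) hp
    rwa [add_sub_cancel, Real.div_rpow hb ha.le] at this
  rw [le_div_iff₀ (Real.rpow_pos_of_pos ha p)] at bernoulli
  have key : (1 + p * (b / a - 1)) * a ^ p * a = a ^ p * a - p * a ^ p * (a - b) := by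
    field_simp; ring
  nlinarith [mul_le_mul_of_nonneg_right bernoulli ha.le]

lemma rpow_sub_rpow_mul_le_of_le_one {p a b : ℝ} (hp₀ : 0 ≤ p) (hp₁ : p ≤ 1) (hb : 0 ≤ b)
    (hba : b ≤ a) : (a ^ p - b ^ p) * b ≤ p * b ^ p * (a - b) := by
  rcases hb.eq_or_lt with rfl | hb
  · simpa using mul_nonneg (mul_nonneg hp₀ (Real.rpow_nonneg le_rfl p)) hba
  have ha := hb.le.trans hba
  have bernoulli : a ^ p / b ^ p ≤ 1 + p * (a / b - 1) := by
    have := rpow_one_add_le_one_add_mul_self (s := a / b - 1)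
      (by linarith [div_nonneg ha hb.le]) hp₀ hp₁
    rwa [add_sub_cancel, Real.div_rpow ha hb.le] at this
  rw [div_le_iff₀ (Real.rpow_pos_of_pos hb p)] at bernoulli
  have key : (1 + p * (a / b - 1)) * b ^ p * b = b ^ p * b + p * b ^ p * (a - b) := by
    field_simp
  nlinarith [mul_le_mul_of_nonneg_right bernoulli hb.le]

/-- For `p < 1` the derivative of `t ↦ t ^ p` blows up at `0`, so `a ^ p - b ^ p` is not
bounded by a multiple of `a - b`; the factor `b` compensates. -/
lemma rpow_sub_rpow_mul_le {p a b : ℝ} (hp : 0 ≤ p) (hb : 0 ≤ b) (hba : b ≤ a) :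
    (a ^ p - b ^ p) * b ≤ p * a ^ p * (a - b) := by
  have hpow : b ^ p ≤ a ^ p := Real.rpow_le_rpow hb hba hp
  rcases le_total 1 p with hp₁ | hp₁
  · calc (a ^ p - b ^ p) * b ≤ (a ^ p - b ^ p) * a := by gcongr
      _ ≤ p * a ^ p * (a - b) := rpow_sub_rpow_mul_le_of_one_le hp₁ hb hba
  · calc (a ^ p - b ^ p) * b ≤ p * b ^ p * (a - b) :=
          rpow_sub_rpow_mul_le_of_le_one hp hp₁ hb hba
      _ ≤ p * a ^ p * (a - b) := by gcongr

lemma norm_rpow_smul_sub_rpow_smul_le {E : Type*} [SeminormedAddCommGroup E] [NormedSpace ℝ E]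
    {p M : ℝ} (hp : 0 ≤ p) {x y : E} (hx : ‖x‖ ≤ M) (hy : ‖y‖ ≤ M) :
    ‖‖x‖ ^ p • x - ‖y‖ ^ p • y‖ ≤ (p + 1) * M ^ p * ‖x - y‖ := by
  wlog hyx : ‖y‖ ≤ ‖x‖ generalizing x y
  · rw [← norm_neg, neg_sub, ← norm_neg (x - y), neg_sub]
    exact this hy hx (le_of_not_ge hyx)
  have hpow : ‖y‖ ^ p ≤ ‖x‖ ^ p := Real.rpow_le_rpow (norm_nonneg y) hyx hp
  have hxM : ‖x‖ ^ p ≤ M ^ p := Real.rpow_le_rpow (norm_nonneg x) hx hp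
  have hnorm_sub : ‖x‖ - ‖y‖ ≤ ‖x - y‖ := norm_sub_norm_le x y
  calc ‖‖x‖ ^ p • x - ‖y‖ ^ p • y‖
      = ‖‖x‖ ^ p • (x - y) + (‖x‖ ^ p - ‖y‖ ^ p) • y‖ := by
        rw [smul_sub, sub_smul]; abel_nf
    _ ≤ ‖x‖ ^ p * ‖x - y‖ + (‖x‖ ^ p - ‖y‖ ^ p) * ‖y‖ := by
        refine (norm_add_le _ _).trans_eq ?_
        rw [norm_smul, norm_smul, Real.norm_of_nonneg (by positivity),
          Real.norm_of_nonneg (sub_nonneg.2 hpow)]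
    _ ≤ ‖x‖ ^ p * ‖x - y‖ + p * ‖x‖ ^ p * (‖x‖ - ‖y‖) := by
        grw [rpow_sub_rpow_mul_le hp (norm_nonneg y) hyx]
    _ ≤ (p + 1) * ‖x‖ ^ p * ‖x - y‖ := by
        have : 0 ≤ p * ‖x‖ ^ p := by positivity
        nlinarith
    _ ≤ (p + 1) * M ^ p * ‖x - y‖ := by gcongr

lemma enorm_potential_add_power_nonlinearity_sub_le {p M V β : ℝ} (hp : 0 ≤ p) {z₁ z₂ : ℂ}
    (h₁ : ‖z₁‖ ≤ M) (h₂ : ‖z₂‖ ≤ M) :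
    ‖((V : ℂ) * z₁ + (β : ℂ) * (‖z₁‖ ^ p : ℝ) * z₁)
        - ((V : ℂ) * z₂ + (β : ℂ) * (‖z₂‖ ^ p : ℝ) * z₂)‖ₑ
      ≤ (‖V‖ₑ + ENNReal.ofReal ((p + 1) * |β| * M ^ p)) * ‖z₁ - z₂‖ₑ := by
  have hM : 0 ≤ M := (norm_nonneg z₁).trans h₁
  have hsplit : ((V : ℂ) * z₁ + (β : ℂ) * (‖z₁‖ ^ p : ℝ) * z₁)
        - ((V : ℂ) * z₂ + (β : ℂ) * (‖z₂‖ ^ p : ℝ) * z₂)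
      = (V : ℂ) * (z₁ - z₂) + (β : ℂ) * (‖z₁‖ ^ p • z₁ - ‖z₂‖ ^ p • z₂) := by
    simp only [Complex.real_smul]; ring
  have hreal : ‖(V : ℂ) * (z₁ - z₂) + (β : ℂ) * (‖z₁‖ ^ p • z₁ - ‖z₂‖ ^ p • z₂)‖
      ≤ (|V| + (p + 1) * |β| * M ^ p) * ‖z₁ - z₂‖ := by
    grw [norm_add_le, norm_mul, norm_mul, Complex.norm_real, Complex.norm_real,
      norm_rpow_smul_sub_rpow_smul_le hp h₁ h₂]
    rw [Real.norm_eq_abs, Real.norm_eq_abs]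
    exact le_of_eq (by ring)
  rw [hsplit, ← ofReal_norm, ← ofReal_norm, ← ofReal_norm, Real.norm_eq_abs,
    ← ENNReal.ofReal_add (abs_nonneg V) (by positivity), ← ENNReal.ofReal_mul (by positivity)]
  exact ENNReal.ofReal_le_ofReal hreal

theorem B_lipschitz_L2_general {α : Type*} [MeasurableSpace α] (μ : Measure α)
    (V : α → ℝ)
    (β σ : ℝ) (hσ : 0 < σ) (M : ℝ)
    (B : (α → ℂ) → (α → ℂ))
    (hB : ∀ v : α → ℂ, ∀ x : α,
      B v x = (V x : ℂ) * v x + (β : ℂ) * (‖v x‖ ^ (2 * σ) : ℝ) * v x)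
    (v w : α → ℂ) (hv : Measurable v) (hw : Measurable w)
    (hvM : ∀ᵐ x ∂μ, ‖v x‖ ≤ M)
    (hwM : ∀ᵐ x ∂μ, ‖w x‖ ≤ M) :
    eLpNorm (fun x => B v x - B w x) 2 μ
      ≤ (eLpNorm V ⊤ μ + ENNReal.ofReal ((2 * σ + 1) * |β| * M ^ (2 * σ)))
          * eLpNorm (fun x => v x - w x) 2 μ := by
  refine eLpNorm_le_mul_eLpNorm_of_ae_le_mul'' 2 (hv.sub hw).aestronglyMeasurable ?_
  filter_upwards [hvM, hwM, ae_le_eLpNormEssSup (f := V) (μ := μ)] with x hvx hwx hVx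
  rw [← eLpNorm_exponent_top] at hVx
  rw [hB, hB]
  calc _ ≤ _ := enorm_potential_add_power_nonlinearity_sub_le (by linarith) hvx hwx
    _ ≤ _ := by gcongr

/-- Lipschitz estimate in `L²` for the nonlinear operator
`B(v)(x) = V(x) v(x) + β |v(x)|^(2σ) v(x)` under `L^∞` bounds on `v` and `w`
(Lemma 3.3 of the paper). -/
theorem B_lipschitz_L2 {α : Type*} [MeasurableSpace α] (μ : Measure α)
    (V : α → ℝ) (hVmeas : Measurable V) (hVfin : eLpNorm V ⊤ μ < ⊤)
    (β σ : ℝ) (hσ : 0 < σ) (M : ℝ)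
    (B : (α → ℂ) → (α → ℂ))
    (hB : ∀ v : α → ℂ, ∀ x : α,
      B v x = (V x : ℂ) * v x + (β : ℂ) * (‖v x‖ ^ (2 * σ) : ℝ) * v x)
    (v w : α → ℂ) (hv : Measurable v) (hw : Measurable w)
    (hvM : ∀ᵐ x ∂μ, ‖v x‖ ≤ M)
    (hwM : ∀ᵐ x ∂μ, ‖w x‖ ≤ M) :
    eLpNorm (fun x => B v x - B w x) 2 μ
      ≤ (eLpNorm V ⊤ μ + ENNReal.ofReal ((2 * σ + 1) * |β| * M ^ (2 * σ)))
          * eLpNorm (fun x => v x - w x) 2 μ :=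
  B_lipschitz_L2_general μ V β σ hσ M B hB v w hv hw hvM hwM
end

section
/- Let (α, μ) be a measure space, let V : α → ℝ be measurable with essential supremum ‖V‖_∞ < ∞, let β ∈ ℝ, σ > 0, and define, for measurable v, w : α → ℂ, dB(v)[w](x) = −i [ V(x) w(x) + β|v(x)|^(2σ) w(x) + βσ|v(x)|^(2σ) w(x) + G(v(x)) conj(w(x)) ], where G(z) = βσ |z|^(2σ−2) z² for z ≠ 0 and G(0) = 0. Then for all measurable v, w : α → ℂ with |v(x)| ≤ M almost everywhere, one has ‖dB(v)[w]‖_{L²} ≤ (‖V‖_∞ + (2σ+1)|β| M^(2σ)) ‖w‖_{L²}. -/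
open MeasureTheory

/-! Pointwise `|dB(v)[w]| ≤ (|V| + |β| |v|^(2σ) + |β| σ |v|^(2σ) + |G(v)|) |w|`, and
`|G(z)| = |β| σ |z|^(2σ)`. With `|v| ≤ M` this is the a.e. bound
`|dB(v)[w]| ≤ (‖V‖_∞ + (2σ + 1) |β| M^(2σ)) |w|`, which passes to `L²`. -/

theorem eLpNorm_le_eLpNorm_top_add_ofReal_mul {α E F G : Type*} [MeasurableSpace α]
    {μ : Measure α} [NormedAddCommGroup E] [NormedAddCommGroup F] [NormedAddCommGroup G]
    {f : α → E} {V : α → F} {g : α → G} {C : ℝ} (p : ENNReal)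
    (hg : AEStronglyMeasurable g μ) (h : ∀ᵐ x ∂μ, ‖f x‖ ≤ (‖V x‖ + C) * ‖g x‖) :
    eLpNorm f p μ ≤ (eLpNorm V ⊤ μ + ENNReal.ofReal C) * eLpNorm g p μ := by
  refine eLpNorm_le_mul_eLpNorm_of_ae_le_mul'' p hg ?_
  filter_upwards [h, ae_le_eLpNormEssSup (f := V) (μ := μ)] with x hfx hVx
  calc ‖f x‖ₑ = ENNReal.ofReal ‖f x‖ := (ofReal_norm _).symm
    _ ≤ ENNReal.ofReal ((‖V x‖ + C) * ‖g x‖) := ENNReal.ofReal_le_ofReal hfx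
    _ = ENNReal.ofReal (‖V x‖ + C) * ‖g x‖ₑ := by
        rw [ENNReal.ofReal_mul' (norm_nonneg _), ofReal_norm]
    _ ≤ (‖V x‖ₑ + ENNReal.ofReal C) * ‖g x‖ₑ := by
        grw [ENNReal.ofReal_add_le, ofReal_norm]
    _ ≤ (eLpNorm V ⊤ μ + ENNReal.ofReal C) * ‖g x‖ₑ := by
        rw [eLpNorm_exponent_top]
        gcongr

theorem norm_ofReal_mul_rpow_sub_two_mul_sq (c p : ℝ) {z : ℂ} (hz : z ≠ 0) :
    ‖(c : ℂ) * (‖z‖ ^ (p - 2) : ℝ) * z ^ 2‖ = |c| * ‖z‖ ^ p := by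
  have hz' : 0 < ‖z‖ := norm_pos_iff.mpr hz
  rw [norm_mul, norm_mul, Complex.norm_real, Complex.norm_real, norm_pow, Real.norm_eq_abs,
    Real.norm_of_nonneg (Real.rpow_nonneg hz'.le _), mul_assoc, ← Real.rpow_natCast,
    ← Real.rpow_add hz']
  norm_num

theorem norm_linearized_term_le (a β σ r : ℝ) (hσ : 0 ≤ σ) (hr : 0 ≤ r) (g w : ℂ)
    (hg : ‖g‖ ≤ |β| * σ * r) :
    ‖(a : ℂ) * w + (β : ℂ) * (r : ℂ) * w + ((β * σ : ℝ) : ℂ) * (r : ℂ) * w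
        + g * (starRingEnd ℂ) w‖ ≤ (|a| + (2 * σ + 1) * |β| * r) * ‖w‖ := by
  calc _ ≤ ‖(a : ℂ) * w‖ + ‖(β : ℂ) * (r : ℂ) * w‖ + ‖((β * σ : ℝ) : ℂ) * (r : ℂ) * w‖
        + ‖g * (starRingEnd ℂ) w‖ := norm_add₄_le
    _ ≤ |a| * ‖w‖ + |β| * r * ‖w‖ + |β| * σ * r * ‖w‖ + |β| * σ * r * ‖w‖ := by
        simp only [norm_mul, Complex.norm_real, Complex.norm_conj, Real.norm_eq_abs,
          abs_of_nonneg hr, abs_of_nonneg hσ]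
        gcongr
    _ = (|a| + (2 * σ + 1) * |β| * r) * ‖w‖ := by ring

theorem dB_bounded_L2_general {α : Type*} [MeasurableSpace α] (μ : Measure α)
    (V : α → ℝ)
    (β σ : ℝ) (hσ : 0 < σ) (M : ℝ)
    (G : ℂ → ℂ)
    (hG : ∀ z : ℂ, G z = if z = 0 then 0
      else ((β * σ : ℝ) : ℂ) * (‖z‖ ^ (2 * σ - 2) : ℝ) * z ^ 2)
    (dB : (α → ℂ) → (α → ℂ) → (α → ℂ))
    (hdB : ∀ v w : α → ℂ, ∀ x : α,
      dB v w x = -Complex.I *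
        ((V x : ℂ) * w x
          + (β : ℂ) * (‖v x‖ ^ (2 * σ) : ℝ) * w x
          + ((β * σ : ℝ) : ℂ) * (‖v x‖ ^ (2 * σ) : ℝ) * w x
          + G (v x) * (starRingEnd ℂ) (w x)))
    (v w : α → ℂ) (hw : Measurable w)
    (hvM : ∀ᵐ x ∂μ, ‖v x‖ ≤ M) :
    eLpNorm (dB v w) 2 μ
      ≤ (eLpNorm V ⊤ μ + ENNReal.ofReal ((2 * σ + 1) * |β| * M ^ (2 * σ)))
          * eLpNorm w 2 μ := by
  refine eLpNorm_le_eLpNorm_top_add_ofReal_mul 2 hw.aestronglyMeasurable ?_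
  filter_upwards [hvM] with x hx
  have hvx : ‖v x‖ ^ (2 * σ) ≤ M ^ (2 * σ) :=
    Real.rpow_le_rpow (norm_nonneg _) hx (by positivity)
  have hGvx : ‖G (v x)‖ ≤ |β| * σ * ‖v x‖ ^ (2 * σ) := by
    rw [hG]
    split_ifs with hv0
    · rw [norm_zero]
      positivity
    · rw [norm_ofReal_mul_rpow_sub_two_mul_sq _ _ hv0, abs_mul, abs_of_pos hσ]
  rw [hdB, norm_mul, norm_neg, Complex.norm_I, one_mul, Real.norm_eq_abs]
  calc _ ≤ (|V x| + (2 * σ + 1) * |β| * ‖v x‖ ^ (2 * σ)) * ‖w x‖ :=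
        norm_linearized_term_le _ _ _ _ hσ.le (by positivity) _ _ hGvx
    _ ≤ _ := by gcongr

/-- Boundedness in `L²` of the Gâteaux derivative `dB(v)[w]` of the nonlinearity
operator `B(v) = V v + β |v|^(2σ) v`, under an `L^∞` bound on `v`
(Lemma 3.4 of the paper). -/
theorem dB_bounded_L2 {α : Type*} [MeasurableSpace α] (μ : Measure α)
    (V : α → ℝ) (hVmeas : Measurable V) (hVfin : eLpNorm V ⊤ μ < ⊤)
    (β σ : ℝ) (hσ : 0 < σ) (M : ℝ)
    (G : ℂ → ℂ)
    (hG : ∀ z : ℂ, G z = if z = 0 then 0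
      else ((β * σ : ℝ) : ℂ) * (‖z‖ ^ (2 * σ - 2) : ℝ) * z ^ 2)
    (dB : (α → ℂ) → (α → ℂ) → (α → ℂ))
    (hdB : ∀ v w : α → ℂ, ∀ x : α,
      dB v w x = -Complex.I *
        ((V x : ℂ) * w x
          + (β : ℂ) * (‖v x‖ ^ (2 * σ) : ℝ) * w x
          + ((β * σ : ℝ) : ℂ) * (‖v x‖ ^ (2 * σ) : ℝ) * w x
          + G (v x) * (starRingEnd ℂ) (w x)))
    (v w : α → ℂ) (hv : Measurable v) (hw : Measurable w)
    (hvM : ∀ᵐ x ∂μ, ‖v x‖ ≤ M) :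
    eLpNorm (dB v w) 2 μ
      ≤ (eLpNorm V ⊤ μ + ENNReal.ofReal ((2 * σ + 1) * |β| * M ^ (2 * σ)))
          * eLpNorm w 2 μ :=
  dB_bounded_L2_general μ V β σ hσ M G hG dB hdB v w hw hvM
end

section
/- Let σ ≥ 1/2, β ∈ ℝ and M > 0, and define G : ℂ → ℂ by G(z) = βσ |z|^(2σ−2) z² for z ≠ 0 and G(0) = 0. Then there exists a constant C > 0, depending only on σ, |β| and M, such that for all z₁, z₂ ∈ ℂ with |z₁| ≤ M and |z₂| ≤ M, one has |G(z₁) − G(z₂)| ≤ C |z₁ − z₂|. -/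
/-!
Write `G(z) = βσ g(z)` with `g(z) = |z|^(p-2) z²`, `p = 2σ ≥ 1` (the formula already vanishes at
`z = 0`). For `|w| ≤ |z|` split
`g(z) - g(w) = |z|^(p-2) (z + w)(z - w) + (|z|^(p-2) - |w|^(p-2)) w²`.
The first term is at most `2|z|^(p-1)|z - w|`; for the second, the mean value theorem for
`x ↦ x^(p-2)` on `[|w|, |z|]` gives a point `ξ ≥ |w|`, so the factor `w²` absorbs the possibly
singular `ξ^(p-3)` and leaves `|p-2| |z|^(p-1) |z - w|`.
-/

open Real

lemma abs_rpow_sub_rpow_mul_sq_le {q a b : ℝ} (hq : -1 ≤ q) (hb : 0 ≤ b) (hba : b ≤ a) :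
    |a ^ q - b ^ q| * b ^ 2 ≤ |q| * a ^ (q + 1) * (a - b) := by
  rcases hb.eq_or_lt with rfl | hb
  · simp only [ne_eq, OfNat.ofNat_ne_zero, not_false_eq_true, zero_pow, mul_zero, sub_zero]
    have ha : 0 ≤ a := hba
    positivity
  rcases hba.eq_or_lt with rfl | hba
  · simp
  obtain ⟨ξ, ⟨hbξ, hξa⟩, hξ⟩ := exists_hasDerivAt_eq_slope (fun x : ℝ => x ^ q)
    (fun x => q * x ^ (q - 1)) hba
    (fun x hx => (continuousAt_rpow_const x q (.inl (hb.trans_le hx.1).ne')).continuousWithinAt)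
    (fun x hx => hasDerivAt_rpow_const (.inl (hb.trans hx.1).ne'))
  have hξ0 : 0 < ξ := hb.trans hbξ
  have hmvt : a ^ q - b ^ q = q * ξ ^ (q - 1) * (a - b) := by
    rw [hξ, div_mul_cancel₀ _ (sub_pos.mpr hba).ne']
  have hξ_pow : ξ ^ (q - 1) * b ^ 2 ≤ a ^ (q + 1) :=
    calc ξ ^ (q - 1) * b ^ 2 ≤ ξ ^ (q - 1) * ξ ^ 2 := by gcongr
      _ = ξ ^ (q + 1) := by
        rw [← rpow_two, ← rpow_add hξ0]; ring_nf
      _ ≤ a ^ (q + 1) := by gcongr; linarith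
  calc |a ^ q - b ^ q| * b ^ 2 = |q| * (ξ ^ (q - 1) * b ^ 2) * (a - b) := by
        rw [hmvt, abs_mul, abs_mul, abs_of_pos (rpow_pos_of_pos hξ0 _),
          abs_of_pos (sub_pos.mpr hba)]
        ring
    _ ≤ |q| * a ^ (q + 1) * (a - b) := by gcongr

lemma norm_rpow_mul_sq_sub_le_of_norm_le {p : ℝ} (hp : 1 ≤ p) {z w : ℂ} (hwz : ‖w‖ ≤ ‖z‖) :
    ‖(‖z‖ ^ (p - 2) : ℝ) * z ^ 2 - (‖w‖ ^ (p - 2) : ℝ) * w ^ 2‖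
      ≤ (2 + |p - 2|) * ‖z‖ ^ (p - 1) * ‖z - w‖ := by
  rcases (norm_nonneg z).eq_or_lt with hz | hz
  · have hw : w = 0 := norm_le_zero_iff.mp (hz ▸ hwz)
    rw [eq_comm, norm_eq_zero] at hz
    simp [hz, hw]
  have hsplit : ((‖z‖ ^ (p - 2) : ℝ) : ℂ) * z ^ 2 - (‖w‖ ^ (p - 2) : ℝ) * w ^ 2
      = (‖z‖ ^ (p - 2) : ℝ) * ((z + w) * (z - w))
        + ((‖z‖ ^ (p - 2) - ‖w‖ ^ (p - 2) : ℝ) : ℂ) * w ^ 2 := by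
    push_cast; ring
  have hfirst : ‖((‖z‖ ^ (p - 2) : ℝ) : ℂ) * ((z + w) * (z - w))‖
      ≤ 2 * ‖z‖ ^ (p - 1) * ‖z - w‖ := by
    rw [norm_mul, norm_mul, Complex.norm_real, norm_of_nonneg (rpow_nonneg hz.le _)]
    calc ‖z‖ ^ (p - 2) * (‖z + w‖ * ‖z - w‖) ≤ ‖z‖ ^ (p - 2) * (2 * ‖z‖ * ‖z - w‖) := by
          gcongr
          linarith [norm_add_le z w]
      _ = 2 * (‖z‖ ^ (p - 2) * ‖z‖) * ‖z - w‖ := by ring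
      _ = 2 * ‖z‖ ^ (p - 1) * ‖z - w‖ := by
          rw [← rpow_add_one hz.ne']; ring_nf
  have hsecond : ‖((‖z‖ ^ (p - 2) - ‖w‖ ^ (p - 2) : ℝ) : ℂ) * w ^ 2‖
      ≤ |p - 2| * ‖z‖ ^ (p - 1) * ‖z - w‖ := by
    rw [norm_mul, Complex.norm_real, norm_pow, Real.norm_eq_abs]
    calc |‖z‖ ^ (p - 2) - ‖w‖ ^ (p - 2)| * ‖w‖ ^ 2
        ≤ |p - 2| * ‖z‖ ^ (p - 2 + 1) * (‖z‖ - ‖w‖) :=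
          abs_rpow_sub_rpow_mul_sq_le (by linarith) (norm_nonneg w) hwz
      _ ≤ |p - 2| * ‖z‖ ^ (p - 1) * ‖z - w‖ := by
          rw [show p - 2 + 1 = p - 1 by ring]
          gcongr
          exact norm_sub_norm_le z w
  calc _ ≤ _ := hsplit ▸ norm_add_le _ _
    _ ≤ 2 * ‖z‖ ^ (p - 1) * ‖z - w‖ + |p - 2| * ‖z‖ ^ (p - 1) * ‖z - w‖ :=
        add_le_add hfirst hsecond
    _ = (2 + |p - 2|) * ‖z‖ ^ (p - 1) * ‖z - w‖ := by ring

lemma norm_rpow_mul_sq_sub_le {p M : ℝ} (hp : 1 ≤ p) {z w : ℂ} (hz : ‖z‖ ≤ M) (hw : ‖w‖ ≤ M) :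
    ‖(‖z‖ ^ (p - 2) : ℝ) * z ^ 2 - (‖w‖ ^ (p - 2) : ℝ) * w ^ 2‖
      ≤ (2 + |p - 2|) * M ^ (p - 1) * ‖z - w‖ := by
  wlog hwz : ‖w‖ ≤ ‖z‖ generalizing z w
  · rw [norm_sub_rev, norm_sub_rev z]
    exact this hw hz (le_of_not_ge hwz)
  calc _ ≤ (2 + |p - 2|) * ‖z‖ ^ (p - 1) * ‖z - w‖ := norm_rpow_mul_sq_sub_le_of_norm_le hp hwz
    _ ≤ (2 + |p - 2|) * M ^ (p - 1) * ‖z - w‖ := by gcongr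

/-- Pointwise Lipschitz estimate, for `σ ≥ 1/2`, of the function
`G(z) = βσ |z|^(2σ−2) z²` (with `G(0) = 0`) on the closed disk of radius `M`
(key ingredient of Lemma 4.2 of the paper). -/
theorem G_lipschitz (σ β M : ℝ) (hσ : 1 / 2 ≤ σ) (hM : 0 < M)
    (G : ℂ → ℂ)
    (hG : ∀ z : ℂ, G z = if z = 0 then 0
      else ((β * σ : ℝ) : ℂ) * (‖z‖ ^ (2 * σ - 2) : ℝ) * z ^ 2) :
    ∃ C : ℝ, 0 < C ∧ ∀ z₁ z₂ : ℂ, ‖z₁‖ ≤ M → ‖z₂‖ ≤ M →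
      ‖G z₁ - G z₂‖ ≤ C * ‖z₁ - z₂‖ := by
  have hG' (z : ℂ) : G z = ((β * σ : ℝ) : ℂ) * ((‖z‖ ^ (2 * σ - 2) : ℝ) * z ^ 2) := by
    rw [hG]; split_ifs with hz <;> simp [hz, mul_assoc]
  refine ⟨(|β * σ| + 1) * ((2 + |2 * σ - 2|) * M ^ (2 * σ - 1)), by positivity,
    fun z₁ z₂ hz₁ hz₂ => ?_⟩
  rw [hG', hG', ← mul_sub, norm_mul, Complex.norm_real, Real.norm_eq_abs, mul_assoc]
  gcongr
  · linarith
  · exact norm_rpow_mul_sq_sub_le (by linarith) hz₁ hz₂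
end

section
/- Let (α, μ) be a measure space, let V : α → ℝ be measurable with essential supremum ‖V‖_∞ < ∞, let β ∈ ℝ, σ ≥ 1/2, and define dB(v)[w](x) = −i [ V(x) w(x) + β|v(x)|^(2σ) w(x) + βσ|v(x)|^(2σ) w(x) + G(v(x)) conj(w(x)) ], where G(z) = βσ |z|^(2σ−2) z² for z ≠ 0 and G(0) = 0. Then there exists C > 0, depending only on ‖V‖_∞, σ, |β| and M, such that for all measurable v₁, v₂, w₁, w₂ : α → ℂ with |vⱼ(x)| ≤ M and |wⱼ(x)| ≤ M almost everywhere (j = 1, 2), one has ‖dB(v₁)[w₁] − dB(v₂)[w₂]‖_{L²} ≤ C ( ‖v₁ − v₂‖_{L²} + ‖w₁ − w₂‖_{L²} ). -/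
open MeasureTheory

/-!
Pointwise, `dB(v)[w]` is `w ↦ c w + a(v) w + b(v) w̄` with multipliers `a(v) ∝ |v|^(2σ)` and
`b(v) ∝ |v|^(2σ-2) v²`. For `2σ ≥ 1` both are bounded by `M^(2σ)` and Lipschitz with constant
`O(M^(2σ-1))` on the ball of radius `M`: by the mean value theorem for `t ↦ t^(2σ)`, and for `b`
after splitting `b(v₁) - b(v₂) = |v₁|^(2σ-2) (v₁² - v₂²) + (|v₁|^(2σ-2) - |v₂|^(2σ-2)) v₂²`,
where `|v₂|² ≤ |v₁|²` absorbs the possibly negative power `2σ - 3` of the derivative.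
Writing `a₁ w₁ - a₂ w₂ = a₁ (w₁ - w₂) + (a₁ - a₂) w₂` gives a pointwise bound
`C (|v₁ - v₂| + |w₁ - w₂|)`, and Minkowski's inequality in `L²` concludes.
-/

namespace Real

lemma abs_rpow_sub_rpow_le {p R a b : ℝ} (hp : 1 ≤ p) (ha : 0 ≤ a) (hb : 0 ≤ b)
    (haR : a ≤ R) (hbR : b ≤ R) : |a ^ p - b ^ p| ≤ p * R ^ (p - 1) * |a - b| := by
  have hderiv : ∀ x ∈ Set.Icc 0 R,
      HasDerivWithinAt (fun y : ℝ => y ^ p) (p * x ^ (p - 1)) (Set.Icc 0 R) x :=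
    fun x _ => (hasDerivAt_rpow_const (Or.inr hp)).hasDerivWithinAt
  have hbound : ∀ x ∈ Set.Icc 0 R, ‖p * x ^ (p - 1)‖ ≤ p * R ^ (p - 1) := by
    intro x hx
    rw [norm_of_nonneg (by have := rpow_nonneg hx.1 (p - 1); positivity)]
    exact mul_le_mul_of_nonneg_left (rpow_le_rpow hx.1 hx.2 (by linarith)) (by linarith)
  simpa only [norm_eq_abs] using
    (convex_Icc 0 R).norm_image_sub_le_of_norm_hasDerivWithin_le hderiv hbound
      ⟨hb, hbR⟩ ⟨ha, haR⟩

lemma abs_rpow_sub_rpow_mul_sq_le {p a b : ℝ} (hp : -1 ≤ p) (ha : 0 ≤ a) (hab : a ≤ b) :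
    |b ^ p - a ^ p| * a ^ 2 ≤ |p| * b ^ (p + 1) * (b - a) := by
  have hb : 0 ≤ b := ha.trans hab
  rcases ha.eq_or_lt with rfl | ha
  · simp only [ne_eq, OfNat.ofNat_ne_zero, not_false_eq_true, zero_pow, mul_zero, sub_zero]
    positivity
  rcases hab.eq_or_lt with rfl | hab
  · simp
  obtain ⟨c, ⟨hac, hcb⟩, hc⟩ := exists_hasDerivAt_eq_slope (fun x => x ^ p)
    (fun x => p * x ^ (p - 1)) hab
    (fun x hx => (continuousAt_rpow_const x p (Or.inl (ha.trans_le hx.1).ne')).continuousWithinAt)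
    (fun x hx => hasDerivAt_rpow_const (Or.inl (ha.trans hx.1).ne'))
  have hc0 : 0 < c := ha.trans hac
  have hmvt : b ^ p - a ^ p = p * c ^ (p - 1) * (b - a) := by
    rw [hc]; field_simp [(sub_pos.2 hab).ne']
  have hcsq : c ^ (p - 1) * c ^ 2 = c ^ (p + 1) := by
    rw [← rpow_natCast, ← rpow_add hc0]; norm_num; ring_nf
  calc |b ^ p - a ^ p| * a ^ 2 = |p| * (c ^ (p - 1) * a ^ 2) * (b - a) := by
        rw [hmvt, abs_mul, abs_mul, abs_of_pos (rpow_pos_of_pos hc0 _),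
          abs_of_pos (sub_pos.2 hab)]
        ring
    _ ≤ |p| * (c ^ (p - 1) * c ^ 2) * (b - a) := by gcongr
    _ ≤ |p| * b ^ (p + 1) * (b - a) := by
        rw [hcsq]; gcongr; linarith

end Real

lemma abs_norm_rpow_sub_norm_rpow_le {E : Type*} [SeminormedAddCommGroup E] {p R : ℝ} {a b : E}
    (hp : 1 ≤ p) (ha : ‖a‖ ≤ R) (hb : ‖b‖ ≤ R) :
    |‖a‖ ^ p - ‖b‖ ^ p| ≤ p * R ^ (p - 1) * ‖a - b‖ := by
  have hR : 0 ≤ R := (norm_nonneg a).trans ha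
  calc |‖a‖ ^ p - ‖b‖ ^ p| ≤ p * R ^ (p - 1) * |‖a‖ - ‖b‖| :=
        Real.abs_rpow_sub_rpow_le hp (norm_nonneg a) (norm_nonneg b) ha hb
    _ ≤ p * R ^ (p - 1) * ‖a - b‖ := by
        have := Real.rpow_nonneg hR (p - 1)
        exact mul_le_mul_of_nonneg_left (abs_norm_sub_norm_le a b) (by positivity)

lemma norm_mul_sub_mul_le_of_norm_le {A : Type*} [SeminormedRing A] {a₁ a₂ b₁ b₂ : A}
    {K L R : ℝ} (ha₁ : ‖a₁‖ ≤ K) (ha : ‖a₁ - a₂‖ ≤ L) (hb₂ : ‖b₂‖ ≤ R) :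
    ‖a₁ * b₁ - a₂ * b₂‖ ≤ K * ‖b₁ - b₂‖ + L * R := by
  calc ‖a₁ * b₁ - a₂ * b₂‖ = ‖a₁ * (b₁ - b₂) + (a₁ - a₂) * b₂‖ := by noncomm_ring
    _ ≤ ‖a₁‖ * ‖b₁ - b₂‖ + ‖a₁ - a₂‖ * ‖b₂‖ :=
        (norm_add_le _ _).trans (add_le_add (norm_mul_le _ _) (norm_mul_le _ _))
    _ ≤ K * ‖b₁ - b₂‖ + L * R := by
        gcongr
        exact (norm_nonneg _).trans ha

namespace Complex

lemma norm_rpow_mul_sq_le (q : ℝ) (z : ℂ) : ‖((‖z‖ ^ (q - 2) : ℝ) : ℂ) * z ^ 2‖ ≤ ‖z‖ ^ q := by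
  rcases eq_or_ne z 0 with rfl | hz
  · simp only [ne_eq, OfNat.ofNat_ne_zero, not_false_eq_true, zero_pow, mul_zero, norm_zero]
    exact Real.rpow_nonneg le_rfl q
  have hr : 0 < ‖z‖ := norm_pos_iff.2 hz
  rw [norm_mul, norm_real, Real.norm_of_nonneg (Real.rpow_nonneg hr.le _), norm_pow,
    ← Real.rpow_natCast, ← Real.rpow_add hr]
  norm_num

lemma norm_rpow_mul_sq_sub_le {q R : ℝ} {z₁ z₂ : ℂ} (hq : 1 ≤ q) (h₁ : ‖z₁‖ ≤ R)
    (h₂ : ‖z₂‖ ≤ R) :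
    ‖((‖z₁‖ ^ (q - 2) : ℝ) : ℂ) * z₁ ^ 2 - ((‖z₂‖ ^ (q - 2) : ℝ) : ℂ) * z₂ ^ 2‖
      ≤ (q + 2) * R ^ (q - 1) * ‖z₁ - z₂‖ := by
  wlog h₂₁ : ‖z₂‖ ≤ ‖z₁‖ generalizing z₁ z₂
  · rw [norm_sub_rev, norm_sub_rev z₁]
    exact this h₂ h₁ (le_of_not_ge h₂₁)
  set r₁ := ‖z₁‖
  set r₂ := ‖z₂‖
  rcases (norm_nonneg z₁).eq_or_lt with h0 | hr₁
  · have hz₁ : z₁ = 0 := norm_eq_zero.1 h0.symm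
    have hz₂ : z₂ = 0 := norm_eq_zero.1 (le_antisymm (h₂₁.trans h0.symm.le) (norm_nonneg _))
    simp [hz₁, hz₂]
  have hrR : r₁ ^ (q - 1) ≤ R ^ (q - 1) := Real.rpow_le_rpow hr₁.le h₁ (by linarith)
  have hsplit : ((r₁ ^ (q - 2) : ℝ) : ℂ) * z₁ ^ 2 - ((r₂ ^ (q - 2) : ℝ) : ℂ) * z₂ ^ 2
      = ((r₁ ^ (q - 2) : ℝ) : ℂ) * ((z₁ - z₂) * (z₁ + z₂))
        + ((r₁ ^ (q - 2) - r₂ ^ (q - 2) : ℝ) : ℂ) * z₂ ^ 2 := by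
    push_cast; ring
  have hfirst : ‖((r₁ ^ (q - 2) : ℝ) : ℂ) * ((z₁ - z₂) * (z₁ + z₂))‖
      ≤ 2 * R ^ (q - 1) * ‖z₁ - z₂‖ := by
    have hsum : ‖z₁ + z₂‖ ≤ 2 * r₁ := by linarith [norm_add_le z₁ z₂]
    have hexp : r₁ ^ (q - 2) * r₁ = r₁ ^ (q - 1) := by
      rw [← Real.rpow_add_one hr₁.ne']; congr 1; ring
    rw [norm_mul, norm_mul, norm_real, Real.norm_of_nonneg (Real.rpow_nonneg hr₁.le _)]
    calc r₁ ^ (q - 2) * (‖z₁ - z₂‖ * ‖z₁ + z₂‖) ≤ r₁ ^ (q - 2) * (‖z₁ - z₂‖ * (2 * r₁)) := by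
          gcongr
      _ = 2 * r₁ ^ (q - 1) * ‖z₁ - z₂‖ := by rw [← hexp]; ring
      _ ≤ 2 * R ^ (q - 1) * ‖z₁ - z₂‖ := by gcongr
  have hsecond : ‖((r₁ ^ (q - 2) - r₂ ^ (q - 2) : ℝ) : ℂ) * z₂ ^ 2‖
      ≤ q * R ^ (q - 1) * ‖z₁ - z₂‖ := by
    have hmvt := Real.abs_rpow_sub_rpow_mul_sq_le (p := q - 2) (by linarith) (norm_nonneg z₂) h₂₁
    have hq2 : |q - 2| ≤ q := abs_le.2 ⟨by linarith, by linarith⟩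
    have hdiff : r₁ - r₂ ≤ ‖z₁ - z₂‖ := (le_abs_self _).trans (abs_norm_sub_norm_le z₁ z₂)
    rw [norm_mul, norm_real, Real.norm_eq_abs, norm_pow]
    calc |r₁ ^ (q - 2) - r₂ ^ (q - 2)| * r₂ ^ 2 ≤ |q - 2| * r₁ ^ (q - 1) * (r₁ - r₂) := by
          convert hmvt using 3; ring_nf
      _ ≤ q * R ^ (q - 1) * ‖z₁ - z₂‖ := by
          have hR : 0 ≤ R := hr₁.le.trans h₁
          have := Real.rpow_nonneg hR (q - 1)
          exact mul_le_mul (mul_le_mul hq2 hrR (Real.rpow_nonneg hr₁.le _) (by linarith)) hdiff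
            (sub_nonneg.2 h₂₁) (by positivity)
  rw [hsplit]
  calc _ ≤ _ := norm_add_le _ _
    _ ≤ 2 * R ^ (q - 1) * ‖z₁ - z₂‖ + q * R ^ (q - 1) * ‖z₁ - z₂‖ := add_le_add hfirst hsecond
    _ = (q + 2) * R ^ (q - 1) * ‖z₁ - z₂‖ := by ring

lemma norm_rpow_mul_sub_rpow_mul_le {q R : ℝ} {z₁ z₂ w₁ w₂ : ℂ} (hq : 1 ≤ q)
    (hz₁ : ‖z₁‖ ≤ R) (hz₂ : ‖z₂‖ ≤ R) (hw₂ : ‖w₂‖ ≤ R) :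
    ‖((‖z₁‖ ^ q : ℝ) : ℂ) * w₁ - ((‖z₂‖ ^ q : ℝ) : ℂ) * w₂‖
      ≤ R ^ q * ‖w₁ - w₂‖ + q * R ^ (q - 1) * ‖z₁ - z₂‖ * R := by
  refine norm_mul_sub_mul_le_of_norm_le ?_ ?_ hw₂
  · rw [norm_real, Real.norm_of_nonneg (Real.rpow_nonneg (norm_nonneg _) _)]
    exact Real.rpow_le_rpow (norm_nonneg _) hz₁ (by linarith)
  · rw [← ofReal_sub, norm_real, Real.norm_eq_abs]
    exact abs_norm_rpow_sub_norm_rpow_le hq hz₁ hz₂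

lemma norm_rpow_mul_sq_mul_conj_sub_le {q R : ℝ} {z₁ z₂ w₁ w₂ : ℂ} (hq : 1 ≤ q)
    (hz₁ : ‖z₁‖ ≤ R) (hz₂ : ‖z₂‖ ≤ R) (hw₂ : ‖w₂‖ ≤ R) :
    ‖((‖z₁‖ ^ (q - 2) : ℝ) : ℂ) * z₁ ^ 2 * starRingEnd ℂ w₁
        - ((‖z₂‖ ^ (q - 2) : ℝ) : ℂ) * z₂ ^ 2 * starRingEnd ℂ w₂‖
      ≤ R ^ q * ‖w₁ - w₂‖ + (q + 2) * R ^ (q - 1) * ‖z₁ - z₂‖ * R := by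
  have := norm_mul_sub_mul_le_of_norm_le (b₁ := starRingEnd ℂ w₁)
    ((norm_rpow_mul_sq_le q z₁).trans
      (Real.rpow_le_rpow (norm_nonneg _) hz₁ (by linarith)))
    (norm_rpow_mul_sq_sub_le hq hz₁ hz₂) ((norm_conj w₂).trans_le hw₂)
  rwa [← map_sub, norm_conj] at this

end Complex

/-- `dB(v)[w](x) = pointwiseDB (V x) β σ (v x) (w x)`; the case split in `G` disappears because
`z ^ 2` already vanishes at `z = 0`. -/
noncomputable def pointwiseDB (c β σ : ℝ) (z w : ℂ) : ℂ :=
  -Complex.I *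
    ((c : ℂ) * w
      + (β : ℂ) * (‖z‖ ^ (2 * σ) : ℝ) * w
      + ((β * σ : ℝ) : ℂ) * (‖z‖ ^ (2 * σ) : ℝ) * w
      + ((β * σ : ℝ) : ℂ) * ((‖z‖ ^ (2 * σ - 2) : ℝ) * z ^ 2) * starRingEnd ℂ w)

lemma norm_pointwiseDB_sub_le {c β σ K R : ℝ} {z₁ z₂ w₁ w₂ : ℂ} (hσ : 1 / 2 ≤ σ)
    (hc : |c| ≤ K) (hz₁ : ‖z₁‖ ≤ R) (hz₂ : ‖z₂‖ ≤ R) (hw₂ : ‖w₂‖ ≤ R) :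
    ‖pointwiseDB c β σ z₁ w₁ - pointwiseDB c β σ z₂ w₂‖
      ≤ (K + (|β| + 2 * |β * σ|) * (R ^ (2 * σ) + (2 * σ + 2) * R ^ (2 * σ - 1) * R))
        * (‖z₁ - z₂‖ + ‖w₁ - w₂‖) := by
  set r : ℂ → ℂ := fun z => ((‖z‖ ^ (2 * σ) : ℝ) : ℂ)
  set ψ : ℂ → ℂ := fun z => ((‖z‖ ^ (2 * σ - 2) : ℝ) : ℂ) * z ^ 2
  set dz := ‖z₁ - z₂‖
  set dw := ‖w₁ - w₂‖
  set A := R ^ (2 * σ)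
  set L := (2 * σ + 2) * R ^ (2 * σ - 1)
  have hq : 1 ≤ 2 * σ := by linarith
  have hR : 0 ≤ R := (norm_nonneg _).trans hz₁
  have hRq : 0 ≤ R ^ (2 * σ - 1) := Real.rpow_nonneg hR _
  have hdz : 0 ≤ dz := norm_nonneg _
  have hdw : 0 ≤ dw := norm_nonneg _
  have hrw : ‖r z₁ * w₁ - r z₂ * w₂‖ ≤ A * dw + L * dz * R :=
    (Complex.norm_rpow_mul_sub_rpow_mul_le hq hz₁ hz₂ hw₂).trans (by gcongr; linarith)
  have hψw : ‖ψ z₁ * starRingEnd ℂ w₁ - ψ z₂ * starRingEnd ℂ w₂‖ ≤ A * dw + L * dz * R :=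
    Complex.norm_rpow_mul_sq_mul_conj_sub_le hq hz₁ hz₂ hw₂
  have hdiff : pointwiseDB c β σ z₁ w₁ - pointwiseDB c β σ z₂ w₂
      = -Complex.I * ((c : ℂ) * (w₁ - w₂) + ((β : ℂ) + (β * σ : ℝ)) * (r z₁ * w₁ - r z₂ * w₂)
          + ((β * σ : ℝ) : ℂ) * (ψ z₁ * starRingEnd ℂ w₁ - ψ z₂ * starRingEnd ℂ w₂)) := by
    simp only [pointwiseDB, r, ψ]
    ring
  have hβ : ‖(β : ℂ) + (β * σ : ℝ)‖ ≤ |β| + |β * σ| := by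
    simpa only [Complex.norm_real, Real.norm_eq_abs] using norm_add_le (β : ℂ) (β * σ : ℝ)
  rw [hdiff, norm_mul, norm_neg, Complex.norm_I, one_mul]
  refine norm_add₃_le.trans ?_
  rw [norm_mul, norm_mul, norm_mul, Complex.norm_real, Complex.norm_real, Real.norm_eq_abs,
    Real.norm_eq_abs]
  calc |c| * dw + ‖(β : ℂ) + (β * σ : ℝ)‖ * ‖r z₁ * w₁ - r z₂ * w₂‖
        + |β * σ| * ‖ψ z₁ * starRingEnd ℂ w₁ - ψ z₂ * starRingEnd ℂ w₂‖
      ≤ K * dw + (|β| + |β * σ|) * (A * dw + L * dz * R) + |β * σ| * (A * dw + L * dz * R) := by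
        gcongr
    _ = K * dw + (|β| + 2 * |β * σ|) * (A * dw + L * R * dz) := by ring
    _ ≤ (K + (|β| + 2 * |β * σ|) * (A + L * R)) * (dz + dw) := by
        have hK : 0 ≤ K := (abs_nonneg c).trans hc
        have hA : 0 ≤ A := Real.rpow_nonneg hR _
        have hB : 0 ≤ |β| + 2 * |β * σ| := by positivity
        have hLR : 0 ≤ L * R := by positivity
        nlinarith [mul_nonneg hK hdz, mul_nonneg (mul_nonneg hB hA) hdz,
          mul_nonneg (mul_nonneg hB hLR) hdw]

namespace MeasureTheory

variable {α E F G : Type*} [MeasurableSpace α] {μ : Measure α}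
  [NormedAddCommGroup E] [NormedAddCommGroup F] [NormedAddCommGroup G]

lemma ae_norm_le_toReal_eLpNorm_top {f : α → E} (hf : eLpNorm f ⊤ μ ≠ ⊤) :
    ∀ᵐ x ∂μ, ‖f x‖ ≤ (eLpNorm f ⊤ μ).toReal := by
  filter_upwards [enorm_ae_le_eLpNormEssSup f μ] with x hx
  rw [← eLpNorm_exponent_top] at hx
  simpa only [toReal_enorm] using ENNReal.toReal_mono hf hx

lemma eLpNorm_le_ofReal_mul_add_of_ae_le {f : α → E} {g : α → F} {h : α → G} {C : ℝ}
    {p : ENNReal} (hp : 1 ≤ p) (hg : AEStronglyMeasurable g μ) (hh : AEStronglyMeasurable h μ)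
    (hf : ∀ᵐ x ∂μ, ‖f x‖ ≤ C * (‖g x‖ + ‖h x‖)) :
    eLpNorm f p μ ≤ ENNReal.ofReal C * (eLpNorm g p μ + eLpNorm h p μ) := by
  have hf' : ∀ᵐ x ∂μ, ‖f x‖ ≤ C * ‖‖g x‖ + ‖h x‖‖ := hf.mono fun x hx => by
    rwa [Real.norm_of_nonneg (by positivity)]
  calc eLpNorm f p μ ≤ ENNReal.ofReal C * eLpNorm (fun x => ‖g x‖ + ‖h x‖) p μ :=
        eLpNorm_le_mul_eLpNorm_of_ae_le_mul hf' p
    _ ≤ ENNReal.ofReal C * (eLpNorm g p μ + eLpNorm h p μ) := by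
        gcongr
        rw [← eLpNorm_norm g, ← eLpNorm_norm h]
        exact eLpNorm_add_le hg.norm hh.norm hp

end MeasureTheory

theorem dB_joint_lipschitz_L2_general {α : Type*} [MeasurableSpace α] (μ : Measure α)
    (V : α → ℝ) (hVfin : eLpNorm V ⊤ μ < ⊤)
    (β σ : ℝ) (hσ : 1 / 2 ≤ σ) (M : ℝ)
    (G : ℂ → ℂ)
    (hG : ∀ z : ℂ, G z = if z = 0 then 0
      else ((β * σ : ℝ) : ℂ) * (‖z‖ ^ (2 * σ - 2) : ℝ) * z ^ 2)
    (dB : (α → ℂ) → (α → ℂ) → (α → ℂ))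
    (hdB : ∀ v w : α → ℂ, ∀ x : α,
      dB v w x = -Complex.I *
        ((V x : ℂ) * w x
          + (β : ℂ) * (‖v x‖ ^ (2 * σ) : ℝ) * w x
          + ((β * σ : ℝ) : ℂ) * (‖v x‖ ^ (2 * σ) : ℝ) * w x
          + G (v x) * (starRingEnd ℂ) (w x))) :
    ∃ C : ℝ, 0 < C ∧
      ∀ v₁ v₂ w₁ w₂ : α → ℂ,
        Measurable v₁ → Measurable v₂ → Measurable w₁ → Measurable w₂ →
        (∀ᵐ x ∂μ, ‖v₁ x‖ ≤ M) → (∀ᵐ x ∂μ, ‖v₂ x‖ ≤ M) →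
        (∀ᵐ x ∂μ, ‖w₁ x‖ ≤ M) → (∀ᵐ x ∂μ, ‖w₂ x‖ ≤ M) →
        eLpNorm (fun x => dB v₁ w₁ x - dB v₂ w₂ x) 2 μ
          ≤ ENNReal.ofReal C *
              (eLpNorm (fun x => v₁ x - v₂ x) 2 μ + eLpNorm (fun x => w₁ x - w₂ x) 2 μ) := by
  set K := (eLpNorm V ⊤ μ).toReal
  set L := K + (|β| + 2 * |β * σ|) * (M ^ (2 * σ) + (2 * σ + 2) * M ^ (2 * σ - 1) * M)
  have hG_eq : ∀ z, G z = ((β * σ : ℝ) : ℂ) * ((‖z‖ ^ (2 * σ - 2) : ℝ) * z ^ 2) := by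
    intro z
    rw [hG]
    split_ifs with h
    · simp [h]
    · ring
  have hdB_eq : ∀ v w x, dB v w x = pointwiseDB (V x) β σ (v x) (w x) := fun v w x => by
    rw [hdB, hG_eq, pointwiseDB]
  refine ⟨max L 1, lt_max_of_lt_right one_pos, ?_⟩
  intro v₁ v₂ w₁ w₂ hv₁ hv₂ hw₁ hw₂ hv₁M hv₂M _ hw₂M
  refine eLpNorm_le_ofReal_mul_add_of_ae_le one_le_two (hv₁.sub hv₂).aestronglyMeasurable
    (hw₁.sub hw₂).aestronglyMeasurable ?_
  filter_upwards [ae_norm_le_toReal_eLpNorm_top hVfin.ne, hv₁M, hv₂M, hw₂M] with x hV h₁ h₂ h₄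
  rw [hdB_eq, hdB_eq]
  refine (norm_pointwiseDB_sub_le hσ hV h₁ h₂ h₄).trans ?_
  gcongr
  exact le_max_left _ _

/-- Joint Lipschitz estimate in `L²` of the Gâteaux derivative `dB(v)[w]` of the
nonlinearity operator `B(v) = V v + β |v|^(2σ) v`, for `σ ≥ 1/2`, under `L^∞`
bounds on the arguments (Lemma 4.2 of the paper). -/
theorem dB_joint_lipschitz_L2 {α : Type*} [MeasurableSpace α] (μ : Measure α)
    (V : α → ℝ) (hVmeas : Measurable V) (hVfin : eLpNorm V ⊤ μ < ⊤)
    (β σ : ℝ) (hσ : 1 / 2 ≤ σ) (M : ℝ)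
    (G : ℂ → ℂ)
    (hG : ∀ z : ℂ, G z = if z = 0 then 0
      else ((β * σ : ℝ) : ℂ) * (‖z‖ ^ (2 * σ - 2) : ℝ) * z ^ 2)
    (dB : (α → ℂ) → (α → ℂ) → (α → ℂ))
    (hdB : ∀ v w : α → ℂ, ∀ x : α,
      dB v w x = -Complex.I *
        ((V x : ℂ) * w x
          + (β : ℂ) * (‖v x‖ ^ (2 * σ) : ℝ) * w x
          + ((β * σ : ℝ) : ℂ) * (‖v x‖ ^ (2 * σ) : ℝ) * w x
          + G (v x) * (starRingEnd ℂ) (w x))) :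
    ∃ C : ℝ, 0 < C ∧
      ∀ v₁ v₂ w₁ w₂ : α → ℂ,
        Measurable v₁ → Measurable v₂ → Measurable w₁ → Measurable w₂ →
        (∀ᵐ x ∂μ, ‖v₁ x‖ ≤ M) → (∀ᵐ x ∂μ, ‖v₂ x‖ ≤ M) →
        (∀ᵐ x ∂μ, ‖w₁ x‖ ≤ M) → (∀ᵐ x ∂μ, ‖w₂ x‖ ≤ M) →
        eLpNorm (fun x => dB v₁ w₁ x - dB v₂ w₂ x) 2 μ
          ≤ ENNReal.ofReal C *
              (eLpNorm (fun x => v₁ x - v₂ x) 2 μ + eLpNorm (fun x => w₁ x - w₂ x) 2 μ) :=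
  dB_joint_lipschitz_L2_general μ V hVfin β σ hσ M G hG dB hdB
end

section
/- Let φ_s(x) = sin(x)/x for x ≠ 0 and φ_s(0) = 1. Then for every τ with 0 < τ < 1, every α with 0 ≤ α ≤ 2, and every θ ∈ ℝ, one has (1 + θ²)^{α/2} |φ_s(τθ²)| ≤ 2 τ^{−α/2}. -/
/-!
Bound the symbol by `|φ_s(y)| ≤ min (1, 1/|y|) ≤ 2 / (1 + |y|)`. With `x = θ²` it then suffices that
`(1 + x)^a ≤ τ^(-a) (1 + τx)` for `a = α/2 ∈ [0, 1]`, i.e. `(τ + τx)^a ≤ 1 + τx`, which holds because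
`τ + τx ≤ 1 + τx` and `r^a ≤ r` for `r ≥ 1`.
-/

/-- The sinc function `φ_s(x) = sin(x)/x` with `φ_s(0) = 1`. -/
noncomputable def phis (x : ℝ) : ℝ := if x = 0 then 1 else Real.sin x / x

lemma abs_phis_le_two_div (y : ℝ) : |phis y| ≤ 2 / (1 + |y|) := by
  unfold phis
  split_ifs with hy
  · simp [hy]
  · have hy' : 0 < |y| := abs_pos.mpr hy
    have hsin_le_one : |Real.sin y| ≤ 1 := Real.abs_sin_le_one y
    have hsin_le_abs : |Real.sin y| ≤ |y| := Real.abs_sin_le_abs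
    rw [abs_div, div_le_div_iff₀ hy' (by positivity)]
    nlinarith

lemma one_add_rpow_le_rpow_neg_mul {t x a : ℝ} (ht0 : 0 < t) (ht1 : t ≤ 1) (hx : 0 ≤ x)
    (ha0 : 0 ≤ a) (ha1 : a ≤ 1) : (1 + x) ^ a ≤ t ^ (-a) * (1 + t * x) := by
  have hsplit : (1 + x) ^ a = t ^ (-a) * (t * (1 + x)) ^ a := by
    rw [Real.mul_rpow ht0.le (by positivity), ← mul_assoc, ← Real.rpow_add ht0,
      neg_add_cancel, Real.rpow_zero, one_mul]
  rw [hsplit]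
  gcongr
  calc (t * (1 + x)) ^ a ≤ (1 + t * x) ^ a := by gcongr; nlinarith
    _ ≤ 1 + t * x := Real.rpow_le_self_of_one_le (by nlinarith) ha1

/-- Fourier-symbol form of the smoothing estimate
`‖φ_s(τΔ)v‖_{H^α} ≲ τ^{−α/2} ‖v‖_{L²}` (Lemma 3.7 of the paper). -/
theorem phis_smoothing_symbol (τ α θ : ℝ) (hτ0 : 0 < τ) (hτ1 : τ < 1)
    (hα0 : 0 ≤ α) (hα2 : α ≤ 2) :
    (1 + θ ^ 2) ^ (α / 2) * |phis (τ * θ ^ 2)| ≤ 2 * τ ^ (-(α / 2)) := by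
  have hτθ : 0 ≤ τ * θ ^ 2 := by positivity
  calc (1 + θ ^ 2) ^ (α / 2) * |phis (τ * θ ^ 2)|
      ≤ τ ^ (-(α / 2)) * (1 + τ * θ ^ 2) * (2 / (1 + τ * θ ^ 2)) := by
        gcongr
        · exact one_add_rpow_le_rpow_neg_mul hτ0 hτ1.le (sq_nonneg θ) (by linarith) (by linarith)
        · have h := abs_phis_le_two_div (τ * θ ^ 2)
          rwa [abs_of_nonneg hτθ] at h
    _ = 2 * τ ^ (-(α / 2)) := by field_simp
end

section
/- Let φ_c(x) = (x cos(x) − sin(x))/x³ for x ≠ 0 and φ_c(0) = −1/3. Then for every τ with 0 < τ < 1, every α with 0 ≤ α ≤ 2, and every θ ∈ ℝ, one has (1 + θ²)^{α/2} |φ_c(τθ²)| ≤ 4 τ^{−α/2}. -/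
/-- The even function `φ_c(x) = (x cos x − sin x)/x³` with `φ_c(0) = −1/3`. -/
noncomputable def phic (x : ℝ) : ℝ :=
  if x = 0 then -1/3 else (x * Real.cos x - Real.sin x) / x ^ 3

/-!
The symbol `φ_c` is bounded near `0` (its numerator is `O(x³)`, by the Taylor bounds for `sin`
and `cos`) and decays like `|x|⁻²` at infinity, so `(1 + |x|) |φ_c(x)|` is bounded. Since
`τ (1 + θ²) ≤ 1 + τθ²` and `α/2 ≤ 1`, the weight satisfies
`(1 + θ²)^{α/2} ≤ τ^{-α/2} (1 + τθ²)`, which reduces the theorem to that bound at `x = τθ²`.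
-/

open Real

lemma abs_mul_cos_sub_sin_le_of_abs_le_one {x : ℝ} (hx : |x| ≤ 1) :
    |x * cos x - sin x| ≤ |x| ^ 3 / 2 := by
  have hcos := cos_bound hx
  have hsin := sin_bound hx
  have habs := abs_nonneg x
  have hx4 : |x| ^ 4 ≤ |x| ^ 3 := pow_le_pow_of_le_one habs hx (by norm_num)
  have hx5 : |x| ^ 5 ≤ |x| ^ 3 := pow_le_pow_of_le_one habs hx (by norm_num)
  calc |x * cos x - sin x|
      = |x * (cos x - (1 - x ^ 2 / 2)) - (sin x - (x - x ^ 3 / 6)) - x ^ 3 / 3| := by ring_nf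
    _ ≤ |x| * (|x| ^ 4 * (5 / 96)) + |x| ^ 5 / 100 + |x| ^ 3 / 3 := by
        refine (abs_sub _ _).trans (add_le_add ((abs_sub _ _).trans (add_le_add ?_ hsin)) ?_)
        · rw [abs_mul]; gcongr
        · rw [abs_div, abs_pow]; norm_num
    _ ≤ |x| ^ 3 / 2 := by nlinarith

lemma abs_phic_le_half {x : ℝ} (hx : |x| ≤ 1) : |phic x| ≤ 1 / 2 := by
  rcases eq_or_ne x 0 with rfl | hx0
  · norm_num [phic]
  have hx3 : 0 < |x| ^ 3 := by positivity
  rw [phic, if_neg hx0, abs_div, abs_pow, div_le_iff₀ hx3]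
  linarith [abs_mul_cos_sub_sin_le_of_abs_le_one hx]

lemma abs_phic_le_two_div_sq {x : ℝ} (hx : 1 ≤ |x|) : |phic x| ≤ 2 / |x| ^ 2 := by
  have hx0 : x ≠ 0 := abs_pos.mp (zero_lt_one.trans_le hx)
  have hnum : |x * cos x - sin x| ≤ 2 * |x| :=
    calc |x * cos x - sin x| ≤ |x| * |cos x| + |sin x| := by
          rw [← abs_mul]; exact abs_sub _ _
      _ ≤ |x| * 1 + 1 := by gcongr <;> simp [abs_cos_le_one, abs_sin_le_one]
      _ ≤ 2 * |x| := by linarith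
  rw [phic, if_neg hx0, abs_div, abs_pow, div_le_div_iff₀ (by positivity) (by positivity)]
  calc |x * cos x - sin x| * |x| ^ 2 ≤ 2 * |x| * |x| ^ 2 := by gcongr
    _ = 2 * |x| ^ 3 := by ring

lemma one_add_abs_mul_abs_phic_le_four (x : ℝ) : (1 + |x|) * |phic x| ≤ 4 := by
  rcases le_total |x| 1 with hx | hx
  · nlinarith [abs_phic_le_half hx, abs_nonneg (phic x)]
  · calc (1 + |x|) * |phic x| ≤ (|x| + |x|) * (2 / |x| ^ 2) := by
          gcongr; exact abs_phic_le_two_div_sq hx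
      _ = 4 / |x| := by field_simp; ring
      _ ≤ 4 := div_le_self (by norm_num) hx

lemma one_add_rpow_le_rpow_neg_mul_s11 {τ a y : ℝ} (hτ0 : 0 < τ) (hτ1 : τ ≤ 1) (ha0 : 0 ≤ a)
    (ha1 : a ≤ 1) (hy : 0 ≤ y) : (1 + y) ^ a ≤ τ ^ (-a) * (1 + τ * y) := by
  have hscale : τ * (1 + y) ≤ 1 + τ * y := by nlinarith
  calc (1 + y) ^ a = τ ^ (-a) * (τ * (1 + y)) ^ a := by
        rw [mul_rpow hτ0.le (by positivity), ← mul_assoc, ← rpow_add hτ0, neg_add_cancel,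
          rpow_zero, one_mul]
    _ ≤ τ ^ (-a) * (1 + τ * y) ^ a := by gcongr
    _ ≤ τ ^ (-a) * (1 + τ * y) ^ (1 : ℝ) := by
        gcongr; exact le_add_of_nonneg_right (by positivity)
    _ = τ ^ (-a) * (1 + τ * y) := by rw [rpow_one]

/-- Fourier-symbol form of the smoothing estimate
`‖φ_c(τΔ)φ‖_{H^α} ≲ τ^{−α/2} ‖φ‖_{L²}` (Lemma 3.9 of the paper). -/
theorem phic_smoothing_symbol (τ α θ : ℝ) (hτ0 : 0 < τ) (hτ1 : τ < 1)
    (hα0 : 0 ≤ α) (hα2 : α ≤ 2) :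
    (1 + θ ^ 2) ^ (α / 2) * |phic (τ * θ ^ 2)| ≤ 4 * τ ^ (-(α / 2)) := by
  have hweight := one_add_rpow_le_rpow_neg_mul_s11 (a := α / 2) hτ0 hτ1.le (by linarith)
    (by linarith) (sq_nonneg θ)
  have hsymbol := one_add_abs_mul_abs_phic_le_four (τ * θ ^ 2)
  rw [abs_of_nonneg (by positivity)] at hsymbol
  calc (1 + θ ^ 2) ^ (α / 2) * |phic (τ * θ ^ 2)|
      ≤ τ ^ (-(α / 2)) * (1 + τ * θ ^ 2) * |phic (τ * θ ^ 2)| := by gcongr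
    _ = τ ^ (-(α / 2)) * ((1 + τ * θ ^ 2) * |phic (τ * θ ^ 2)|) := mul_assoc _ _ _
    _ ≤ 4 * τ ^ (-(α / 2)) := by
        rw [mul_comm 4]; gcongr
end

section
/- Let φ₁(z) = (e^z − 1)/z for z ∈ ℂ, z ≠ 0, and φ₁(0) = 1. Then for every τ with 0 < τ < 1, every α with 0 ≤ α ≤ 2, and every θ ∈ ℝ, one has (1 + θ²)^{α/2} |φ₁(−iτθ²)| ≤ 4 τ^{−α/2}. -/
/-!
Since `|e^{iy} - 1| ≤ min(|y|, 2)`, the symbol obeys `|φ₁(iy)| ≤ 3 / (1 + |y|)`. Writing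
`(1 + θ²)^{α/2} = τ^{-α/2} (τ(1 + θ²))^{α/2}` and using `τ(1 + θ²) ≤ 1 + τθ²` (as `τ ≤ 1`) with
`α/2 ≤ 1`, the factor `(τ(1 + θ²))^{α/2}` is absorbed by the decay `1 / (1 + τθ²)` of the symbol.
-/

/-- The entire function `φ₁(z) = (e^z − 1)/z` with `φ₁(0) = 1`. -/
noncomputable def phi1 (z : ℂ) : ℂ := if z = 0 then 1 else (Complex.exp z - 1) / z

open Complex

theorem norm_phi1_I_mul_le (y : ℝ) : ‖phi1 (I * y)‖ ≤ 3 / (1 + |y|) := by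
  rcases eq_or_ne y 0 with rfl | hy
  · norm_num [phi1]
  have hz : I * y ≠ 0 := mul_ne_zero I_ne_zero (ofReal_ne_zero.2 hy)
  have hy_pos : 0 < |y| := abs_pos.2 hy
  set e := ‖exp (I * y) - 1‖
  have he_le_abs : e ≤ |y| := Real.norm_exp_I_mul_ofReal_sub_one_le
  have he_le_two : e ≤ 2 :=
    (norm_sub_le _ _).trans (by rw [norm_exp_I_mul_ofReal, norm_one]; norm_num)
  rw [phi1, if_neg hz, norm_div, norm_mul, norm_I, one_mul, norm_real, Real.norm_eq_abs,
    le_div_iff₀ (by positivity)]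
  calc e / |y| * (1 + |y|) = e / |y| + e := by field_simp
    _ ≤ 1 + 2 := add_le_add ((div_le_one hy_pos).2 he_le_abs) he_le_two
    _ = 3 := by norm_num

/-- Fourier-symbol form of the smoothing estimate
`‖φ₁(iτΔ)v‖_{H^α} ≲ τ^{−α/2} ‖v‖_{L²}` for the first step of the sEWI. -/
theorem phi1_smoothing_symbol (τ α θ : ℝ) (hτ0 : 0 < τ) (hτ1 : τ < 1)
    (hα0 : 0 ≤ α) (hα2 : α ≤ 2) :
    (1 + θ ^ 2) ^ (α / 2) * ‖phi1 (-Complex.I * (τ : ℂ) * ((θ : ℂ)) ^ 2)‖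
      ≤ 4 * τ ^ (-(α / 2)) := by
  have hτθ : 0 ≤ τ * θ ^ 2 := by positivity
  have hsymbol : ‖phi1 (-I * τ * θ ^ 2)‖ ≤ 3 / (1 + τ * θ ^ 2) := by
    have harg : -I * τ * θ ^ 2 = I * ((-(τ * θ ^ 2) : ℝ) : ℂ) := by push_cast; ring
    have h := norm_phi1_I_mul_le (-(τ * θ ^ 2))
    rwa [abs_neg, abs_of_nonneg hτθ, ← harg] at h
  have hscaled : (τ * (1 + θ ^ 2)) ^ (α / 2) ≤ 1 + τ * θ ^ 2 :=
    (Real.rpow_le_rpow (by positivity) (by nlinarith) (by linarith)).trans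
      (Real.rpow_le_self_of_one_le (by linarith) (by linarith))
  have hsplit : (1 + θ ^ 2) ^ (α / 2) = τ ^ (-(α / 2)) * (τ * (1 + θ ^ 2)) ^ (α / 2) := by
    rw [Real.mul_rpow hτ0.le (by positivity), ← mul_assoc, ← Real.rpow_add hτ0, neg_add_cancel,
      Real.rpow_zero, one_mul]
  have hτpow : 0 < τ ^ (-(α / 2)) := Real.rpow_pos_of_pos hτ0 _
  calc (1 + θ ^ 2) ^ (α / 2) * ‖phi1 (-I * τ * θ ^ 2)‖
      ≤ τ ^ (-(α / 2)) * (1 + τ * θ ^ 2) * (3 / (1 + τ * θ ^ 2)) := by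
        rw [hsplit]; gcongr
    _ = 3 * τ ^ (-(α / 2)) := by field_simp
    _ ≤ 4 * τ ^ (-(α / 2)) := by gcongr; norm_num
end

section
/- Let τ > 0, θ ∈ ℝ, and let v : ℝ → ℂ be continuously differentiable on [0, τ]. Then |θ ∫_{0}^{τ} e^{i(τ−s)θ} v(s) ds| ≤ 2 sup_{s ∈ [0,τ]} |v(s)| + τ sup_{s ∈ [0,τ]} |v'(s)|. -/
/-!
Since `d/ds e^{i(τ-s)θ} = -iθ e^{i(τ-s)θ}`, the factor `θ` is absorbed by integrating
by parts, which moves the derivative onto `v`. As `|e^{i(τ-s)θ}| = 1`, the two boundary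
terms cost at most `sup |v|` each and the remaining integral of `e^{i(τ-s)θ} v'` at most
`τ sup |v'|`.
-/

open Set Complex intervalIntegral
open MeasureTheory (volume)
open scoped Interval

lemma norm_le_iSup_norm_of_continuousOn {X E : Type*} [TopologicalSpace X] [SeminormedAddGroup E]
    {K : Set X} {f : X → E} (hK : IsCompact K) (hf : ContinuousOn f K) {x : X} (hx : x ∈ K) :
    ‖f x‖ ≤ ⨆ y : K, ‖f y‖ := by
  have hbdd : BddAbove (range fun y : K => ‖f y‖) := by
    simpa only [image_eq_range] using hK.bddAbove_image hf.norm
  exact le_ciSup hbdd ⟨x, hx⟩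

theorem const_mul_integral_mul_eq_of_hasDerivWithinAt {a b : ℝ} {c : ℂ} {u v v' : ℝ → ℂ}
    (hu : ∀ s ∈ [[a, b]], HasDerivWithinAt u (c * u s) [[a, b]] s)
    (hv : ∀ s ∈ [[a, b]], HasDerivWithinAt v (v' s) [[a, b]] s)
    (hv' : IntervalIntegrable v' volume a b) :
    c * ∫ s in a..b, u s * v s = u b * v b - u a * v a - ∫ s in a..b, u s * v' s := by
  have hu_cont : ContinuousOn u [[a, b]] := fun s hs => (hu s hs).continuousWithinAt
  have hv_cont : ContinuousOn v [[a, b]] := fun s hs => (hv s hs).continuousWithinAt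
  have hcuv : IntervalIntegrable (fun s => c * u s * v s) volume a b :=
    ((continuousOn_const.mul hu_cont).mul hv_cont).intervalIntegrable
  have huv' : IntervalIntegrable (fun s => u s * v' s) volume a b :=
    hv'.continuousOn_mul hu_cont
  have hparts := integral_deriv_mul_eq_sub_of_hasDerivWithinAt hu hv
    ((continuousOn_const.mul hu_cont).intervalIntegrable) hv'
  rw [integral_add hcuv huv'] at hparts
  simp only [mul_assoc, integral_const_mul] at hparts
  linear_combination hparts

theorem norm_const_mul_integral_mul_le {a b : ℝ} (hab : a ≤ b) {c : ℂ} {u v v' : ℝ → ℂ}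
    {M M' : ℝ} (hu : ∀ s ∈ Icc a b, HasDerivWithinAt u (c * u s) (Icc a b) s)
    (hu_norm : ∀ s ∈ Icc a b, ‖u s‖ ≤ 1)
    (hv : ∀ s ∈ Icc a b, HasDerivWithinAt v (v' s) (Icc a b) s)
    (hv' : IntervalIntegrable v' volume a b)
    (hM : ∀ s ∈ Icc a b, ‖v s‖ ≤ M) (hM' : ∀ s ∈ Icc a b, ‖v' s‖ ≤ M') :
    ‖c * ∫ s in a..b, u s * v s‖ ≤ 2 * M + (b - a) * M' := by
  rw [← uIcc_of_le hab] at hu hv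
  have ha : a ∈ Icc a b := left_mem_Icc.mpr hab
  have hb : b ∈ Icc a b := right_mem_Icc.mpr hab
  have hnorm_mul {w : ℝ → ℂ} {C : ℝ} (hw : ∀ s ∈ Icc a b, ‖w s‖ ≤ C) {s : ℝ}
      (hs : s ∈ Icc a b) : ‖u s * w s‖ ≤ C :=
    (norm_mul _ _).trans_le <|
      (mul_le_of_le_one_left (norm_nonneg _) (hu_norm s hs)).trans (hw s hs)
  have hintegral : ‖∫ s in a..b, u s * v' s‖ ≤ (b - a) * M' := by
    refine (norm_integral_le_of_norm_le_const fun s hs => ?_).trans_eq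
      (by rw [abs_of_nonneg (sub_nonneg.mpr hab), mul_comm])
    rw [uIoc_of_le hab] at hs
    exact hnorm_mul hM' (Ioc_subset_Icc_self hs)
  rw [const_mul_integral_mul_eq_of_hasDerivWithinAt hu hv hv']
  calc ‖u b * v b - u a * v a - ∫ s in a..b, u s * v' s‖
      ≤ ‖u b * v b‖ + ‖u a * v a‖ + ‖∫ s in a..b, u s * v' s‖ :=
        (norm_sub_le _ _).trans (add_le_add_left (norm_sub_le _ _) _)
    _ ≤ M + M + (b - a) * M' := by
        gcongr
        exacts [hnorm_mul hM hb, hnorm_mul hM ha]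
    _ = 2 * M + (b - a) * M' := by ring

lemma hasDerivAt_exp_I_mul_sub_mul (τ θ s : ℝ) :
    HasDerivAt (fun s : ℝ => exp (I * ((τ : ℂ) - (s : ℂ)) * (θ : ℂ)))
      (-(I * θ) * exp (I * ((τ : ℂ) - (s : ℂ)) * (θ : ℂ))) s := by
  have hlin : HasDerivAt (fun z : ℂ => I * ((τ : ℂ) - z) * θ) (-(I * θ)) s := by
    simpa using (((hasDerivAt_id (s : ℂ)).const_sub (τ : ℂ)).const_mul I).mul_const (θ : ℂ)
  simpa only [mul_comm] using hlin.cexp.comp_ofReal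

lemma norm_exp_I_mul_sub_mul (τ θ s : ℝ) :
    ‖exp (I * ((τ : ℂ) - (s : ℂ)) * (θ : ℂ))‖ = 1 := by
  have : I * ((τ : ℂ) - (s : ℂ)) * (θ : ℂ) = ((τ - s) * θ : ℝ) * I := by push_cast; ring
  rw [this, norm_exp_ofReal_mul_I]

/-- Single-Fourier-mode form of the `H²`-bound on the Duhamel integral
`u₁ = −i∫_0^τ e^{i(τ−s)Δ} v(s) ds` (inequality (3.23) of the paper):
`|θ ∫_0^τ e^{i(τ−s)θ} v(s) ds| ≤ 2 sup |v| + τ sup |v'|`. -/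
theorem duhamel_symbol_bound (τ θ : ℝ) (hτ : 0 < τ) (v v' : ℝ → ℂ)
    (hderiv : ∀ s ∈ Set.Icc (0:ℝ) τ, HasDerivWithinAt v (v' s) (Set.Icc (0:ℝ) τ) s)
    (hcont : ContinuousOn v' (Set.Icc (0:ℝ) τ)) :
    ‖((θ : ℂ) *
        ∫ s in (0:ℝ)..τ, Complex.exp (Complex.I * ((τ : ℂ) - (s : ℂ)) * (θ : ℂ)) * v s)‖
      ≤ 2 * (⨆ s : Set.Icc (0:ℝ) τ, ‖(v s)‖)
        + τ * (⨆ s : Set.Icc (0:ℝ) τ, ‖(v' s)‖) := by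
  have hv_cont : ContinuousOn v (Icc 0 τ) := fun s hs => (hderiv s hs).continuousWithinAt
  have hbound := norm_const_mul_integral_mul_le hτ.le
    (fun s _ => (hasDerivAt_exp_I_mul_sub_mul τ θ s).hasDerivWithinAt)
    (fun s _ => (norm_exp_I_mul_sub_mul τ θ s).le) hderiv
    (hcont.intervalIntegrable_of_Icc hτ.le)
    (fun s => norm_le_iSup_norm_of_continuousOn isCompact_Icc hv_cont)
    (fun s => norm_le_iSup_norm_of_continuousOn isCompact_Icc hcont)
  simpa only [sub_zero, norm_mul, norm_neg, norm_I, one_mul] using hbound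
end

section
/- Let b, θ ∈ ℝ with |b| ≤ 1, and let φ_s(θ) = sin(θ)/θ for θ ≠ 0, φ_s(0) = 1. Then every complex root λ of the quadratic equation λ² + 2 i b φ_s(θ) e^{−iθ} λ − e^{−2iθ} = 0 satisfies |λ| = 1. -/
/-!
Substituting `λ = μ e^{-iθ}` turns the characteristic polynomial into `μ² + 2icμ - 1` with the
real coefficient `c = b φ_s(θ)`, and `|c| ≤ 1` because `|φ_s| ≤ 1`. Completing the square,
`(μ + ic)² = 1 - c² ≥ 0`, so the roots are `μ = ±√(1 - c²) - ic`, both of modulus one.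
-/

open Complex

lemma phis_eq_sinc : phis = Real.sinc := rfl

lemma norm_eq_one_of_sq_add_two_I_mul_sub_one_eq_zero {c : ℝ} (hc : |c| ≤ 1) {μ : ℂ}
    (h : μ ^ 2 + 2 * I * c * μ - 1 = 0) : ‖μ‖ = 1 := by
  set s := √(1 - c ^ 2)
  have hs : s ^ 2 = 1 - c ^ 2 := Real.sq_sqrt (by nlinarith [sq_abs c, abs_nonneg c])
  have hs' : (s : ℂ) ^ 2 = 1 - (c : ℂ) ^ 2 := by exact_mod_cast hs
  have hfactor : (μ - (s + (-c) * I)) * (μ - (-s + (-c) * I)) = 0 := by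
    linear_combination h - hs' + (c : ℂ) ^ 2 * I_sq
  have hnorm (t : ℝ) (ht : t ^ 2 = s ^ 2) : ‖(t : ℂ) + (-c : ℝ) * I‖ = 1 := by
    rw [norm_add_mul_I, ht, hs]
    simp
  rcases mul_eq_zero.mp hfactor with hplus | hminus
  · rw [sub_eq_zero.mp hplus]
    exact_mod_cast hnorm s rfl
  · rw [sub_eq_zero.mp hminus]
    exact_mod_cast hnorm (-s) (neg_sq s)

lemma norm_eq_of_sq_add_two_I_mul_sub_sq_eq_zero {c : ℝ} (hc : |c| ≤ 1) {u lam : ℂ}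
    (hu : u ≠ 0) (h : lam ^ 2 + 2 * I * c * u * lam - u ^ 2 = 0) : ‖lam‖ = ‖u‖ := by
  have hμ : (lam / u) ^ 2 + 2 * I * c * (lam / u) - 1 = 0 := by
    field_simp
    linear_combination h
  have := norm_eq_one_of_sq_add_two_I_mul_sub_one_eq_zero hc hμ
  rwa [norm_div, div_eq_one_iff_eq (norm_ne_zero_iff.mpr hu)] at this

/-- Von Neumann linear stability of the two-step sEWI: if `|b| ≤ 1` then every
root of the characteristic polynomial
`λ² + 2ib φ_s(θ) e^{−iθ} λ − e^{−2iθ}` lies on the unit circle. -/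
theorem sEWI_von_neumann_stability (b θ : ℝ) (hb : |b| ≤ 1) :
    ∀ lam : ℂ,
      lam ^ 2 + 2 * Complex.I * (b : ℂ) * ((phis θ : ℝ) : ℂ)
          * Complex.exp (-Complex.I * (θ : ℂ)) * lam
          - Complex.exp (-2 * Complex.I * (θ : ℂ)) = 0 →
      ‖lam‖ = 1 := by
  intro lam h
  set u := exp (-I * θ)
  have hc : |b * phis θ| ≤ 1 := by
    rw [abs_mul, ← one_mul 1]
    exact mul_le_mul hb (phis_eq_sinc ▸ Real.abs_sinc_le_one θ) (abs_nonneg _) zero_le_one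
  have hu2 : exp (-2 * I * θ) = u ^ 2 := by
    rw [← exp_nat_mul]; ring_nf
  have hu : ‖u‖ = 1 := by
    simp [u, norm_exp]
  rw [← hu]
  refine norm_eq_of_sq_add_two_I_mul_sub_sq_eq_zero hc (exp_ne_zero _) ?_
  rw [← h, hu2]
  push_cast
  ring
end
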